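/- (Theorem 4.1, part 2: Lax–Friedrichs boundary-layer set for a convex scalar conservation law.) Let f : ℝ → ℝ be C² with f''(u) > 0 for every u, let u_* satisfy f'(u_*) = 0, fix M > 0 and u_B ∈ [−M, M], and let λ > 0, Q ∈ (0,1) satisfy (λ/Q)·sup_{|w| ≤ 8M} |f'(w)| ≤ 1. Define E_Lax^layer(u_B) = { v_∞ ∈ ℝ : there exists v : ℕ → ℝ with v(0) = u_B, ½(f(v(n)) + f(v(n+1))) − (Q/λ)(v(n+1) − v(n)) = f(v_∞) for all n, and v(n) → v_∞ as n → ∞ }. Then: if u_B > u_* (with u_B^* < u_* the unique other solution of f(u_B^*) = f(u_B)), one has E_Lax^layer(u_B) ∩ [−M, M] = ( (−∞, u_B^*) ∪ {u_B} ) ∩ [−M, M]; and if u_B ≤ u_*, one has E_Lax^layer(u_B) ∩ [−M, M] = (−∞, u_*] ∩ [−M, M]. -/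

import Mathlib

open Filter

/-- The set of admissible boundary values based on the discrete boundary layer
equation of a Lax–Friedrichs type scheme with numerical flux
`g(v,w) = ½(f(v)+f(w)) − (Q/λ)(w−v)`: `v_∞` is admissible iff there is a
sequence `v : ℕ → ℝ` with `v(0) = u_B`, `g(v(n), v(n+1)) = f(v_∞)` for all `n`,
and `v(n) → v_∞`. -/
def laxLayerSet (f : ℝ → ℝ) (lam Q uB : ℝ) : Set ℝ :=
  { vinf : ℝ | ∃ v : ℕ → ℝ, v 0 = uB ∧
      (∀ n : ℕ, (f (v n) + f (v (n + 1))) / 2 - Q / lam * (v (n + 1) - v n) = f vinf) ∧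
      Tendsto v atTop (nhds vinf) }

/-!
Write `g(x, y) = ½(f x + f y) − c (y − x)` with `c = Q/λ`, so that `g(w, w) = f w`. The CFL
condition makes `g` strictly increasing in `x` on `[−8M, ∞)` and strictly decreasing in `y` on
`(−∞, 8M]`. Hence a layer with `f v_∞ ≤ f W` that starts at or above `W` stays above `W`, and one
with `f W ≤ f v_∞` that starts at or below `W` and stays in `[−8M, 8M]` stays below `W`. With
`W = u_B` the first fact excludes limits in `[u_B^*, u_*]`; near a limit `v_∞ > u_*`, where `f` is
increasing, the two facts with `W = v(n)` force `v(n) = v_∞` for all large `n`. Convexity of `f`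
makes the step `v(n) ↦ v(n+1)` injective backwards at such a limit, so the layer is constant and
`v_∞ = u_B`.

Conversely, if `f < f v_∞` on `(v_∞, u_B]` (or `f > f v_∞` on `[u_B, v_∞)`), the intermediate value
theorem lets each `v(n+1)` be chosen between `v(n)` and `v_∞`; the resulting monotone sequence
converges to a solution of `f = f v_∞` in that range, which can only be `v_∞`.
-/

open Set Topology

section

variable {f : ℝ → ℝ} {x y u : ℝ}

lemma add_deriv_mul_sub_lt (hf : Differentiable ℝ f) (hf' : StrictMono (deriv f)) (hxy : x ≠ y) :
    f x + deriv f x * (y - x) < f y := by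
  have hconv := hf'.strictConvexOn_univ_of_deriv hf.continuous
  rcases hxy.lt_or_gt with h | h
  · have := hconv.deriv_lt_slope (mem_univ x) (mem_univ y) h (hf x)
    rw [slope_def_field, lt_div_iff₀ (sub_pos.2 h)] at this
    linarith
  · have := hconv.slope_lt_deriv (mem_univ y) (mem_univ x) h (hf x)
    rw [slope_def_field, div_lt_iff₀ (sub_pos.2 h)] at this
    linarith

lemma add_deriv_mul_sub_le (hf : Differentiable ℝ f) (hf' : StrictMono (deriv f)) (x y : ℝ) :
    f x + deriv f x * (y - x) ≤ f y := by
  rcases eq_or_ne x y with rfl | hxy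
  · simp
  · exact (add_deriv_mul_sub_lt hf hf' hxy).le

lemma strictMonoOn_Ici_of_deriv_eq_zero (hf : Differentiable ℝ f) (hf' : StrictMono (deriv f))
    (hu : deriv f u = 0) : StrictMonoOn f (Ici u) := by
  refine strictMonoOn_of_deriv_pos (convex_Ici u) hf.continuous.continuousOn fun x hx => ?_
  rw [interior_Ici] at hx
  exact hu ▸ hf' hx

lemma strictAntiOn_Iic_of_deriv_eq_zero (hf : Differentiable ℝ f) (hf' : StrictMono (deriv f))
    (hu : deriv f u = 0) : StrictAntiOn f (Iic u) := by
  refine strictAntiOn_of_deriv_neg (convex_Iic u) hf.continuous.continuousOn fun x hx => ?_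
  rw [interior_Iic] at hx
  exact hu ▸ hf' hx

end

lemma le_inv_of_mul_sSup_image_le {α : Type*} [TopologicalSpace α] {g : α → ℝ} {K : Set α}
    {r : ℝ} (hK : IsCompact K) (hg : ContinuousOn g K) (hr : 0 < r)
    (h : r * sSup (g '' K) ≤ 1) {w : α} (hw : w ∈ K) : g w ≤ r⁻¹ := by
  have hsup : g w ≤ sSup (g '' K) := le_csSup (hK.bddAbove_image hg) (mem_image_of_mem g hw)
  rw [← one_div, le_div_iff₀ hr]
  nlinarith

lemma exists_seq_of_forall_exists_mem {α : Type*} {s : Set α} {R : α → α → Prop}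
    (h : ∀ x ∈ s, ∃ y ∈ s, R x y) {x₀ : α} (hx₀ : x₀ ∈ s) :
    ∃ v : ℕ → α, v 0 = x₀ ∧ ∀ n, v n ∈ s ∧ R (v n) (v (n + 1)) := by
  choose! F hFs hFR using h
  have hmem : ∀ n, F^[n] x₀ ∈ s := by
    intro n
    induction n with
    | zero => exact hx₀
    | succ n ih => rw [Function.iterate_succ_apply']; exact hFs _ ih
  refine ⟨fun n => F^[n] x₀, rfl, fun n => ⟨hmem n, ?_⟩⟩
  simp only [Function.iterate_succ_apply']
  exact hFR _ (hmem n)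

noncomputable def laxFlux (f : ℝ → ℝ) (c x y : ℝ) : ℝ :=
  (f x + f y) / 2 - c * (y - x)

section

variable {f : ℝ → ℝ} {c a b u x z V W L C : ℝ} {v : ℕ → ℝ}

lemma laxFlux_self (f : ℝ → ℝ) (c x : ℝ) : laxFlux f c x x = f x := by
  unfold laxFlux; ring

lemma mem_laxLayerSet_self (f : ℝ → ℝ) (lam Q uB : ℝ) : uB ∈ laxLayerSet f lam Q uB :=
  ⟨fun _ => uB, rfl, fun _ => laxFlux_self f _ uB, tendsto_const_nhds⟩

lemma continuous_laxFlux_right (hf : Continuous f) (c x : ℝ) : Continuous (laxFlux f c x) := by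
  unfold laxFlux; fun_prop

lemma laxFlux_strictMonoOn_left (hf : Differentiable ℝ f) (hf' : StrictMono (deriv f))
    (ha : -(2 * c) ≤ deriv f a) (y : ℝ) : StrictMonoOn (fun x => laxFlux f c x y) (Ici a) := by
  intro x hx x' _ hxx'
  have htan := add_deriv_mul_sub_lt hf hf' hxx'.ne
  have hmono : deriv f a ≤ deriv f x := hf'.monotone hx
  have hdx : 0 < x' - x := sub_pos.2 hxx'
  simp only [laxFlux]
  nlinarith [mul_nonneg (sub_nonneg.2 hmono) hdx.le,
    mul_nonneg (neg_le_iff_add_nonneg.1 ha) hdx.le]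

lemma laxFlux_strictAntiOn_right (hf : Differentiable ℝ f) (hf' : StrictMono (deriv f))
    (hb : deriv f b ≤ 2 * c) (x : ℝ) : StrictAntiOn (laxFlux f c x) (Iic b) := by
  intro y _ y' hy' hyy'
  have htan := add_deriv_mul_sub_lt hf hf' hyy'.ne'
  have hmono : deriv f y' ≤ deriv f b := hf'.monotone hy'
  have hdy : 0 < y' - y := sub_pos.2 hyy'
  simp only [laxFlux]
  nlinarith [mul_nonneg (sub_nonneg.2 hmono) hdy.le, mul_nonneg (sub_nonneg.2 hb) hdy.le]

lemma eq_of_laxFlux_eq_of_tendsto (hf : Continuous f)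
    (hflux : ∀ n, laxFlux f c (v n) (v (n + 1)) = C) (hlim : Tendsto v atTop (𝓝 L)) :
    f L = C := by
  have hpair : Tendsto (fun n => (v n, v (n + 1))) atTop (𝓝 (L, L)) :=
    hlim.prodMk_nhds (hlim.comp (tendsto_add_atTop_nat 1))
  have hcont : Continuous fun p : ℝ × ℝ => laxFlux f c p.1 p.2 := by
    unfold laxFlux; fun_prop
  have h := (hcont.tendsto (L, L)).comp hpair
  simp only [Function.comp_def, hflux, laxFlux_self] at h
  exact (tendsto_nhds_unique tendsto_const_nhds h).symm

lemma le_of_laxFlux_eq_of_tendsto (hf : Differentiable ℝ f) (hf' : StrictMono (deriv f))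
    (ha : -(2 * c) ≤ deriv f a) (hb : deriv f b ≤ 2 * c) (hW : W ∈ Icc a b) (hfW : f V ≤ f W)
    (h0 : W ≤ v 0) (hflux : ∀ n, laxFlux f c (v n) (v (n + 1)) = f V)
    (hlim : Tendsto v atTop (𝓝 V)) : W ≤ V := by
  have step : ∀ x y, W ≤ x → laxFlux f c x y = f V → W ≤ y := by
    intro x y hx hxy
    by_contra! hy
    have h1 : laxFlux f c W y ≤ laxFlux f c x y :=
      (laxFlux_strictMonoOn_left hf hf' ha y).monotoneOn hW.1 (hW.1.trans hx) hx
    have h2 : laxFlux f c W W < laxFlux f c W y :=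
      laxFlux_strictAntiOn_right hf hf' hb W (hy.le.trans hW.2) hW.2 hy
    rw [laxFlux_self] at h2
    linarith
  have hge : ∀ n, W ≤ v n := by
    intro n
    induction n with
    | zero => exact h0
    | succ n ih => exact step _ _ ih (hflux n)
  exact ge_of_tendsto' hlim hge

lemma ge_of_laxFlux_eq_of_tendsto (hf : Differentiable ℝ f) (hf' : StrictMono (deriv f))
    (ha : -(2 * c) ≤ deriv f a) (hb : deriv f b ≤ 2 * c) (hv : ∀ n, v n ∈ Icc a b)
    (hfW : f W ≤ f V) (h0 : v 0 ≤ W) (hflux : ∀ n, laxFlux f c (v n) (v (n + 1)) = f V)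
    (hlim : Tendsto v atTop (𝓝 V)) : V ≤ W := by
  have step : ∀ x y, x ∈ Icc a b → y ≤ b → x ≤ W → laxFlux f c x y = f V → y ≤ W := by
    intro x y hx hy hxW hxy
    by_contra! hWy
    have h1 : laxFlux f c x y ≤ laxFlux f c W y :=
      (laxFlux_strictMonoOn_left hf hf' ha y).monotoneOn hx.1 (hx.1.trans hxW) hxW
    have h2 : laxFlux f c W y < laxFlux f c W W :=
      laxFlux_strictAntiOn_right hf hf' hb W (hWy.le.trans hy) hy hWy
    rw [laxFlux_self] at h2
    linarith
  have hle : ∀ n, v n ≤ W := by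
    intro n
    induction n with
    | zero => exact h0
    | succ n ih => exact step _ _ (hv n) (hv (n + 1)).2 ih (hflux n)
  exact le_of_tendsto' hlim hle

/-- The tangent lines of `f` at `V` and at `z` rule out both `z > V` and `z < V`. -/
lemma eq_of_laxFlux_eq_of_laxFlux_eq (hf : Differentiable ℝ f) (hf' : StrictMono (deriv f))
    (hV : |deriv f V| < 2 * c) (hz : laxFlux f c z V = f V) (hx : laxFlux f c x z = f V) :
    z = V := by
  obtain ⟨hV₁, hV₂⟩ := abs_lt.1 hV
  simp only [laxFlux] at hz hx
  by_contra hne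
  rcases lt_or_gt_of_ne hne with hzV | hzV
  · rcases le_or_gt z x with hzx | hxz
    · have htan := add_deriv_mul_sub_le hf hf' V x
      nlinarith [mul_pos (sub_pos.2 hV₂) (sub_pos.2 hzV),
        mul_nonneg (neg_lt_iff_pos_add.1 hV₁).le (sub_nonneg.2 hzx)]
    · have htanV := add_deriv_mul_sub_le hf hf' z V
      have htanx := add_deriv_mul_sub_le hf hf' z x
      have hdz : deriv f z + 2 * c ≤ 0 := by
        by_contra! h
        nlinarith [mul_pos h (sub_pos.2 hzV)]
      nlinarith [mul_nonpos_of_nonpos_of_nonneg hdz (sub_pos.2 hxz).le]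
  · have htan := add_deriv_mul_sub_le hf hf' V z
    nlinarith [mul_pos (neg_lt_iff_pos_add.1 hV₁) (sub_pos.2 hzV)]

lemma eventually_eq_of_laxFlux_eq_of_tendsto (hf : Differentiable ℝ f)
    (hf' : StrictMono (deriv f)) (ha : -(2 * c) ≤ deriv f a) (hb : deriv f b ≤ 2 * c)
    (hu : deriv f u = 0) (hV : V ∈ Ioo (max a u) b)
    (hflux : ∀ n, laxFlux f c (v n) (v (n + 1)) = f V) (hlim : Tendsto v atTop (𝓝 V)) :
    ∀ᶠ n in atTop, v n = V := by
  have hmono := (strictMonoOn_Ici_of_deriv_eq_zero hf hf' hu).monotoneOn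
  obtain ⟨N, hN⟩ := eventually_atTop.1 (hlim.eventually (Ioo_mem_nhds hV.1 hV.2))
  filter_upwards [eventually_ge_atTop N] with n hn
  have htail : ∀ k, v (n + k) ∈ Ioo (max a u) b := fun k => hN _ (by omega)
  have hmem : ∀ k, v (n + k) ∈ Icc a b := fun k =>
    ⟨(le_max_left a u).trans (htail k).1.le, (htail k).2.le⟩
  have hu' : ∀ k, u ≤ v (n + k) := fun k => (le_max_right a u).trans (htail k).1.le
  have huV : u ≤ V := (le_max_right a u).trans hV.1.le
  have hlim' : Tendsto (fun k => v (n + k)) atTop (𝓝 V) :=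
    hlim.comp (tendsto_atTop_mono (Nat.le_add_left · n) tendsto_id)
  rcases le_total (v n) V with h | h
  · exact h.antisymm <| ge_of_laxFlux_eq_of_tendsto hf hf' ha hb hmem
      (hmono (hu' 0) huV h) le_rfl (fun k => hflux (n + k)) hlim'
  · exact (le_of_laxFlux_eq_of_tendsto hf hf' ha hb (hmem 0) (hmono huV (hu' 0) h) le_rfl
      (fun k => hflux (n + k)) hlim').antisymm h

lemma forall_eq_of_laxFlux_eq_of_tendsto (hf : Differentiable ℝ f)
    (hf' : StrictMono (deriv f)) (ha : -(2 * c) ≤ deriv f a) (hb : deriv f b ≤ 2 * c)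
    (hu : deriv f u = 0) (hV : V ∈ Ioo (max a u) b) (h0 : a ≤ v 0)
    (hflux : ∀ n, laxFlux f c (v n) (v (n + 1)) = f V) (hlim : Tendsto v atTop (𝓝 V)) :
    ∀ n, v n = V := by
  have haV : a < V := (le_max_left a u).trans_lt hV.1
  have hderivV : |deriv f V| < 2 * c :=
    abs_lt.2 ⟨ha.trans_lt (hf' haV), (hf' hV.2).trans_le hb⟩
  have hback : ∀ n, v (n + 1) = V → v n = V := by
    rintro (_ | n) hn
    · refine (laxFlux_strictMonoOn_left hf hf' ha V).injOn h0 haV.le ?_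
      simpa only [hn, laxFlux_self] using hflux 0
    · exact eq_of_laxFlux_eq_of_laxFlux_eq hf hf' hderivV (hn ▸ hflux (n + 1)) (hflux n)
  obtain ⟨N, hN⟩ := eventually_atTop.1
    (eventually_eq_of_laxFlux_eq_of_tendsto hf hf' ha hb hu hV hflux hlim)
  intro n
  rcases le_total N n with hn | hn
  · exact hN n hn
  · exact Nat.decreasingInduction (motive := fun m _ => v m = V)
      (fun k _ hk => hback k hk) (hN N le_rfl) hn

lemma exists_laxFlux_eq_tendsto_of_lt (hf : Differentiable ℝ f) (hf' : StrictMono (deriv f))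
    (ha : -(2 * c) ≤ deriv f a) {uB : ℝ} (haV : a ≤ V) (hVuB : V < uB)
    (hlevel : ∀ x ∈ Ioc V uB, f x < f V) :
    ∃ v : ℕ → ℝ, v 0 = uB ∧ (∀ n, laxFlux f c (v n) (v (n + 1)) = f V) ∧
      Tendsto v atTop (𝓝 V) := by
  have step : ∀ x ∈ Icc V uB, ∃ y ∈ Icc V uB, y ≤ x ∧ laxFlux f c x y = f V := by
    intro x hx
    have hfx : laxFlux f c x x ≤ f V := by
      rw [laxFlux_self]
      rcases hx.1.eq_or_lt with rfl | h
      · exact le_rfl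
      · exact (hlevel x ⟨h, hx.2⟩).le
    have hfV : f V ≤ laxFlux f c x V := laxFlux_self f c V ▸
      (laxFlux_strictMonoOn_left hf hf' ha V).monotoneOn haV (haV.trans hx.1) hx.1
    obtain ⟨y, hy, hyx⟩ := intermediate_value_Icc' hx.1
      (continuous_laxFlux_right hf.continuous c x).continuousOn ⟨hfx, hfV⟩
    exact ⟨y, ⟨hy.1, hy.2.trans hx.2⟩, hy.2, hyx⟩
  obtain ⟨v, hv0, hv⟩ := exists_seq_of_forall_exists_mem
    (R := fun x y => y ≤ x ∧ laxFlux f c x y = f V) step ⟨hVuB.le, le_rfl⟩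
  have hlim : Tendsto v atTop (𝓝 (⨅ n, v n)) :=
    tendsto_atTop_ciInf (antitone_nat_of_succ_le fun n => (hv n).2.1)
      ⟨V, forall_mem_range.2 fun n => (hv n).1.1⟩
  have hL : ⨅ n, v n ∈ Icc V uB :=
    isClosed_Icc.mem_of_tendsto hlim (Eventually.of_forall fun n => (hv n).1)
  have hfL := eq_of_laxFlux_eq_of_tendsto hf.continuous (fun n => (hv n).2.2) hlim
  have hLV : ⨅ n, v n = V := by
    by_contra hne
    exact (hlevel _ ⟨hL.1.lt_of_ne' hne, hL.2⟩).ne hfL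
  exact ⟨v, hv0, fun n => (hv n).2.2, hLV ▸ hlim⟩

lemma exists_laxFlux_eq_tendsto_of_gt (hf : Differentiable ℝ f) (hf' : StrictMono (deriv f))
    (ha : -(2 * c) ≤ deriv f a) {uB : ℝ} (hauB : a ≤ uB) (huBV : uB < V)
    (hlevel : ∀ x ∈ Ico uB V, f V < f x) :
    ∃ v : ℕ → ℝ, v 0 = uB ∧ (∀ n, laxFlux f c (v n) (v (n + 1)) = f V) ∧
      Tendsto v atTop (𝓝 V) := by
  have step : ∀ x ∈ Icc uB V, ∃ y ∈ Icc uB V, x ≤ y ∧ laxFlux f c x y = f V := by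
    intro x hx
    have hfx : f V ≤ laxFlux f c x x := by
      rw [laxFlux_self]
      rcases hx.2.eq_or_lt with rfl | h
      · exact le_rfl
      · exact (hlevel x ⟨hx.1, h⟩).le
    have hfV : laxFlux f c x V ≤ f V := laxFlux_self f c V ▸
      (laxFlux_strictMonoOn_left hf hf' ha V).monotoneOn (hauB.trans hx.1)
        (hauB.trans (hx.1.trans hx.2)) hx.2
    obtain ⟨y, hy, hyx⟩ := intermediate_value_Icc' hx.2
      (continuous_laxFlux_right hf.continuous c x).continuousOn ⟨hfV, hfx⟩
    exact ⟨y, ⟨hx.1.trans hy.1, hy.2⟩, hy.1, hyx⟩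
  obtain ⟨v, hv0, hv⟩ := exists_seq_of_forall_exists_mem
    (R := fun x y => x ≤ y ∧ laxFlux f c x y = f V) step ⟨le_rfl, huBV.le⟩
  have hlim : Tendsto v atTop (𝓝 (⨆ n, v n)) :=
    tendsto_atTop_ciSup (monotone_nat_of_le_succ fun n => (hv n).2.1)
      ⟨V, forall_mem_range.2 fun n => (hv n).1.2⟩
  have hL : ⨆ n, v n ∈ Icc uB V :=
    isClosed_Icc.mem_of_tendsto hlim (Eventually.of_forall fun n => (hv n).1)
  have hfL := eq_of_laxFlux_eq_of_tendsto hf.continuous (fun n => (hv n).2.2) hlim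
  have hLV : ⨆ n, v n = V := by
    by_contra hne
    exact (hlevel _ ⟨hL.1, hL.2.lt_of_ne hne⟩).ne' hfL
  exact ⟨v, hv0, fun n => (hv n).2.2, hLV ▸ hlim⟩

lemma laxLayerSet_inter_Ioo_of_lt {lam Q uB uBstar : ℝ} (hf : Differentiable ℝ f)
    (hf' : StrictMono (deriv f)) (ha : -(2 * (Q / lam)) ≤ deriv f a)
    (hb : deriv f b ≤ 2 * (Q / lam)) (hu : deriv f u = 0) (huB : uB ∈ Icc a b) (huuB : u < uB)
    (huBstar : uBstar < u) (hfuB : f uBstar = f uB) :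
    laxLayerSet f lam Q uB ∩ Ioo a b = (Iio uBstar ∪ {uB}) ∩ Ioo a b := by
  have hanti := strictAntiOn_Iic_of_deriv_eq_zero hf hf' hu
  have hmono := strictMonoOn_Ici_of_deriv_eq_zero hf hf' hu
  ext V
  simp only [mem_inter_iff, mem_union, mem_Iio, mem_singleton_iff, and_congr_left_iff]
  intro hV
  constructor
  · rintro ⟨v, hv0, hflux, hlim⟩
    rcases lt_or_ge u V with huV | hVu
    · right
      rw [← hv0]
      exact (forall_eq_of_laxFlux_eq_of_tendsto hf hf' ha hb hu ⟨max_lt hV.1 huV, hV.2⟩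
        (hv0 ▸ huB.1) hflux hlim 0).symm
    · left
      by_contra! hV'
      have hfV : f V ≤ f uB := hfuB ▸ hanti.antitoneOn huBstar.le hVu hV'
      have := le_of_laxFlux_eq_of_tendsto hf hf' ha hb huB hfV hv0.ge hflux hlim
      linarith
  · rintro (hV' | rfl)
    · refine exists_laxFlux_eq_tendsto_of_lt hf hf' ha hV.1.le (by linarith) fun x hx => ?_
      rcases le_or_gt x u with hxu | hux
      · exact hanti (by linarith : V ≤ u) hxu hx.1
      · calc f x ≤ f uB := hmono.monotoneOn hux.le huuB.le hx.2
          _ = f uBstar := hfuB.symm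
          _ < f V := hanti (by linarith : V ≤ u) huBstar.le hV'
    · exact mem_laxLayerSet_self f lam Q V

lemma laxLayerSet_inter_Ioo_of_le {lam Q uB : ℝ} (hf : Differentiable ℝ f)
    (hf' : StrictMono (deriv f)) (ha : -(2 * (Q / lam)) ≤ deriv f a)
    (hb : deriv f b ≤ 2 * (Q / lam)) (hu : deriv f u = 0) (hauB : a ≤ uB) (huBu : uB ≤ u) :
    laxLayerSet f lam Q uB ∩ Ioo a b = Iic u ∩ Ioo a b := by
  have hanti := strictAntiOn_Iic_of_deriv_eq_zero hf hf' hu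
  ext V
  simp only [mem_inter_iff, mem_Iic, and_congr_left_iff]
  intro hV
  constructor
  · rintro ⟨v, hv0, hflux, hlim⟩
    by_contra! huV
    have := forall_eq_of_laxFlux_eq_of_tendsto hf hf' ha hb hu ⟨max_lt hV.1 huV, hV.2⟩
      (hv0 ▸ hauB) hflux hlim 0
    linarith
  · intro hVu
    rcases lt_trichotomy V uB with hVuB | rfl | huBV
    · exact exists_laxFlux_eq_tendsto_of_lt hf hf' ha hV.1.le hVuB fun x hx =>
        hanti hVu (hx.2.trans huBu) hx.1
    · exact mem_laxLayerSet_self f lam Q V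
    · exact exists_laxFlux_eq_tendsto_of_gt hf hf' ha hauB huBV fun x hx =>
        hanti (hx.2.le.trans hVu) hVu hx.2

end

theorem laxLayerSet_eq_convex
    (f : ℝ → ℝ) (hf : ContDiff ℝ 2 f) (hf'' : ∀ u, 0 < deriv (deriv f) u)
    (ustar : ℝ) (hstar : deriv f ustar = 0)
    (M : ℝ) (hM : 0 < M) (uB : ℝ) (huB : uB ∈ Set.Icc (-M) M)
    (lam Q : ℝ) (hlam : 0 < lam) (hQ : Q ∈ Set.Ioo (0 : ℝ) 1)
    (hCFL : lam / Q * sSup ((fun w => |deriv f w|) '' Set.Icc (-(8 * M)) (8 * M)) ≤ 1) :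
    (ustar < uB → ∀ uBstar : ℝ, uBstar < ustar → f uBstar = f uB →
      laxLayerSet f lam Q uB ∩ Set.Icc (-M) M
        = (Set.Iio uBstar ∪ {uB}) ∩ Set.Icc (-M) M) ∧
    (uB ≤ ustar →
      laxLayerSet f lam Q uB ∩ Set.Icc (-M) M
        = Set.Iic ustar ∩ Set.Icc (-M) M) := by
  have hdiff : Differentiable ℝ f := hf.differentiable two_ne_zero
  have hf' : StrictMono (deriv f) := strictMono_of_deriv_pos hf''
  have hbound : ∀ w ∈ Icc (-(8 * M)) (8 * M), |deriv f w| ≤ Q / lam := fun w hw => by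
    simpa only [inv_div] using le_inv_of_mul_sSup_image_le isCompact_Icc
      (hf.continuous_deriv one_le_two).abs.continuousOn (div_pos hlam hQ.1) hCFL hw
  have hc : 0 < Q / lam := div_pos hQ.1 hlam
  have ha : -(2 * (Q / lam)) ≤ deriv f (-(8 * M)) := by
    linarith [(abs_le.1 (hbound _ ⟨le_rfl, by linarith⟩)).1]
  have hb : deriv f (8 * M) ≤ 2 * (Q / lam) := by
    linarith [(abs_le.1 (hbound _ ⟨by linarith, le_rfl⟩)).2]
  have hwindow : ∀ S : Set ℝ, S ∩ Icc (-M) M = S ∩ Ioo (-(8 * M)) (8 * M) ∩ Icc (-M) M := by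
    intro S
    rw [inter_assoc, inter_eq_right.2 (Icc_subset_Ioo (by linarith) (by linarith))]
  have huB' : uB ∈ Icc (-(8 * M)) (8 * M) := ⟨by linarith [huB.1], by linarith [huB.2]⟩
  refine ⟨fun hu uBstar hBstar hfuB => ?_, fun hu => ?_⟩
  · rw [hwindow, laxLayerSet_inter_Ioo_of_lt hdiff hf' ha hb hstar huB' hu hBstar hfuB, ← hwindow]
  · rw [hwindow, laxLayerSet_inter_Ioo_of_le hdiff hf' ha hb hstar huB'.1 hu, ← hwindow]
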